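/- arXiv:2004.08080 — 2 statements merged into one kernel-verified Lean document; each statement's English description precedes it below -/
import Mathlib

section
/- Let G be a connected c-cyclic graph with n ≥ 3 vertices (i.e., m = n − 1 + c edges) with c ≤ (n−1)/2. Then ρ_ABC(G) ≤ √(n − 2 + 2c/(n−1)). -/
open scoped Classical
open Finset Matrix

noncomputable def ABCMatrix {n : ℕ} (G : SimpleGraph (Fin n)) : Matrix (Fin n) (Fin n) ℝ :=
  fun i j => if G.Adj i j then
    Real.sqrt (((G.degree i : ℝ) + (G.degree j : ℝ) - 2) / ((G.degree i : ℝ) * (G.degree j : ℝ)))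
  else 0

noncomputable def rhoABC {n : ℕ} (G : SimpleGraph (Fin n)) : ℝ :=
  sSup {r : ℝ | ∃ x : Fin n → ℝ, ∑ i, x i ^ 2 = 1 ∧ r = x ⬝ᵥ (ABCMatrix G).mulVec x}

/-!
Weight every vertex by `g v = √(deg v)`. If `i` has degree `d`, then
`(M g) i = (∑_{k ~ i} √(d + d_k - 2)) / √d`, whose square is at most `d² - 2d + ∑_{k ~ i} d_k` by
Cauchy–Schwarz. Each neighbour of `i` has at most `d` neighbours in the closed neighbourhood of `i`,
so `∑_{k ~ i} d_k ≤ d² + q`, where `q` counts the edges from the neighbourhood of `i` to the set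
`O` of the `o = n - 1 - d` remaining vertices. Since `q ≤ ∑_{v ∈ O} d_v`, `q ≤ d o` and
`o ≤ ∑_{v ∈ O} d_v`, the handshake lemma turns this into `d² - 2d + ∑_{k ~ i} d_k ≤ T d` with
`T = n - 2 + 2c/(n - 1)`. Hence `M g ≤ √T g` entrywise, and for a nonnegative symmetric matrix this
bounds every Rayleigh quotient by `√T` (Schur test: `2 x_i x_j ≤ x_i² g_j / g_i + x_j² g_i / g_j`).
-/

namespace Matrix

variable {ι : Type*} [Fintype ι]

theorem dotProduct_mulVec_le_of_mulVec_le {M : Matrix ι ι ℝ} (hM : M.IsSymm)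
    (hM₀ : ∀ i j, 0 ≤ M i j) {g : ι → ℝ} (hg : ∀ i, 0 < g i) {r : ℝ}
    (hMg : ∀ i, (M *ᵥ g) i ≤ r * g i) (x : ι → ℝ) :
    x ⬝ᵥ (M *ᵥ x) ≤ r * ∑ i, x i ^ 2 := by
  set a : ι → ι → ℝ := fun i j => x i ^ 2 * (g j / g i)
  have amgm : ∀ i j, x i * x j ≤ (a i j + a j i) / 2 := fun i j => by
    have hi := hg i; have hj := hg j
    have : (a i j + a j i) / 2 = x i * x j + (x i * g j - x j * g i) ^ 2 / (2 * g i * g j) := by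
      simp only [a]; field_simp; ring
    rw [this]
    exact le_add_of_nonneg_right (by positivity)
  calc x ⬝ᵥ (M *ᵥ x) = ∑ i, ∑ j, M i j * (x i * x j) := by
        simp only [dotProduct, mulVec, mul_sum]
        exact sum_congr rfl fun i _ => sum_congr rfl fun j _ => by ring
    _ ≤ ∑ i, ∑ j, M i j * ((a i j + a j i) / 2) := by
        gcongr with i _ j _
        exacts [hM₀ i j, amgm i j]
    _ = ∑ i, ∑ j, M i j * a i j := by
        have hswap : ∑ i, ∑ j, M i j * a j i = ∑ i, ∑ j, M i j * a i j := by
          rw [Finset.sum_comm]; simp only [hM.apply]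
        simp only [mul_div_assoc', mul_add, ← Finset.sum_div, Finset.sum_add_distrib, hswap]
        ring
    _ = ∑ i, x i ^ 2 / g i * (M *ᵥ g) i := by
        simp only [a, mulVec, dotProduct, mul_sum]
        refine sum_congr rfl fun i _ => sum_congr rfl fun j _ => by ring
    _ ≤ ∑ i, x i ^ 2 / g i * (r * g i) := by
        gcongr with i
        exacts [div_nonneg (sq_nonneg _) (hg i).le, hMg i]
    _ = r * ∑ i, x i ^ 2 := by
        rw [mul_sum]
        refine sum_congr rfl fun i _ => by field_simp [(hg i).ne']

end Matrix

namespace SimpleGraph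

variable {V : Type*} [Fintype V] (G : SimpleGraph V)

noncomputable def nonNeighborFinset (i : V) : Finset V := (insert i (G.neighborFinset i))ᶜ

theorem card_nonNeighborFinset_add_degree (i : V) :
    #(G.nonNeighborFinset i) + G.degree i + 1 = Fintype.card V := by
  have h := card_add_card_compl (insert i (G.neighborFinset i))
  rw [card_insert_of_notMem (G.notMem_neighborFinset_self i), card_neighborFinset_eq_degree] at h
  rw [nonNeighborFinset, ← h]
  ring

theorem degree_le_degree_add_card_adj_nonNeighborFinset {i k : V} (hik : G.Adj i k) :
    G.degree k ≤ G.degree i + #{v ∈ G.nonNeighborFinset i | G.Adj k v} := by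
  have hsplit : G.neighborFinset k ⊆
      (insert i (G.neighborFinset i)).erase k ∪ {v ∈ G.nonNeighborFinset i | G.Adj k v} := by
    intro v hv
    rw [mem_neighborFinset] at hv
    by_cases hvi : v ∈ insert i (G.neighborFinset i)
    · exact mem_union_left _ (mem_erase.2 ⟨hv.ne', hvi⟩)
    · exact mem_union_right _ (mem_filter.2 ⟨mem_compl.2 hvi, hv⟩)
  have hk : k ∈ insert i (G.neighborFinset i) :=
    mem_insert_of_mem ((G.mem_neighborFinset _ _).2 hik)
  calc G.degree k = #(G.neighborFinset k) := (G.card_neighborFinset_eq_degree k).symm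
    _ ≤ #((insert i (G.neighborFinset i)).erase k) + #{v ∈ G.nonNeighborFinset i | G.Adj k v} :=
        (card_le_card hsplit).trans (card_union_le _ _)
    _ = G.degree i + #{v ∈ G.nonNeighborFinset i | G.Adj k v} := by
        rw [card_erase_of_mem hk, card_insert_of_notMem (G.notMem_neighborFinset_self i),
          card_neighborFinset_eq_degree, Nat.add_sub_cancel]

theorem sum_card_adj_nonNeighborFinset_le_sum_degree (i : V) :
    ∑ k ∈ G.neighborFinset i, #{v ∈ G.nonNeighborFinset i | G.Adj k v} ≤
      ∑ v ∈ G.nonNeighborFinset i, G.degree v := by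
  calc ∑ k ∈ G.neighborFinset i, #{v ∈ G.nonNeighborFinset i | G.Adj k v}
      = ∑ v ∈ G.nonNeighborFinset i, #{k ∈ G.neighborFinset i | G.Adj k v} :=
        sum_card_bipartiteAbove_eq_sum_card_bipartiteBelow G.Adj
    _ ≤ ∑ v ∈ G.nonNeighborFinset i, G.degree v := by
        gcongr with v
        rw [← card_neighborFinset_eq_degree]
        exact card_le_card fun k hk => (G.mem_neighborFinset _ _).2 (mem_filter.1 hk).2.symm

theorem degree_add_sum_degree_add_sum_degree_nonNeighborFinset (i : V) :
    G.degree i + ∑ k ∈ G.neighborFinset i, G.degree k +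
      ∑ v ∈ G.nonNeighborFinset i, G.degree v = 2 * #G.edgeFinset := by
  have h := sum_add_sum_compl (insert i (G.neighborFinset i)) (G.degree ·)
  rw [sum_insert (G.notMem_neighborFinset_self i)] at h
  rw [nonNeighborFinset, ← sum_degrees_eq_twice_card_edges, ← h]

theorem card_sub_one_mul_sq_add_sum_degree_le (hdeg : ∀ v, 0 < G.degree v) (i : V) :
    (Fintype.card V - 1) * (G.degree i ^ 2 + ∑ k ∈ G.neighborFinset i, G.degree k) ≤
      G.degree i * ((Fintype.card V - 1) * (Fintype.card V - 2) + 2 * #G.edgeFinset) := by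
  have hcard := G.card_nonNeighborFinset_add_degree i
  have hsum := G.degree_add_sum_degree_add_sum_degree_nonNeighborFinset i
  set O := G.nonNeighborFinset i
  set W := ∑ k ∈ G.neighborFinset i, G.degree k
  set U := ∑ v ∈ O, G.degree v
  set q := ∑ k ∈ G.neighborFinset i, #{v ∈ O | G.Adj k v}
  have hW : W ≤ G.degree i * G.degree i + q := by
    calc W ≤ ∑ k ∈ G.neighborFinset i, (G.degree i + #{v ∈ O | G.Adj k v}) :=
          sum_le_sum fun k hk =>
            G.degree_le_degree_add_card_adj_nonNeighborFinset ((G.mem_neighborFinset _ _).1 hk)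
      _ = G.degree i * G.degree i + q := by
          rw [sum_add_distrib, sum_const, card_neighborFinset_eq_degree, smul_eq_mul]
  have hqU : q ≤ U := G.sum_card_adj_nonNeighborFinset_le_sum_degree i
  have hqO : q ≤ G.degree i * #O := by
    calc q ≤ ∑ _k ∈ G.neighborFinset i, #O := sum_le_sum fun _ _ => card_filter_le _ _
      _ = G.degree i * #O := by rw [sum_const, card_neighborFinset_eq_degree, smul_eq_mul]
  have hOU : #O ≤ U := card_eq_sum_ones O ▸ sum_le_sum fun v _ => hdeg v
  have key : #O * q + G.degree i * #O ≤ G.degree i * #O * #O + G.degree i * U := by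
    rcases le_total #O (G.degree i) with h | h
    · nlinarith [Nat.mul_le_mul h hqU, Nat.mul_le_mul_left (G.degree i) (Nat.le_mul_self #O)]
    · nlinarith [Nat.mul_le_mul_left #O hqO, Nat.mul_le_mul_left (G.degree i) hOU]
  rw [← hcard, ← hsum]
  obtain ⟨d, hd⟩ : ∃ d, G.degree i = d + 1 := Nat.exists_eq_add_one.2 (hdeg i)
  rw [hd] at hW hqO key ⊢
  rw [show #O + (d + 1) + 1 - 1 = #O + (d + 1) by omega,
    show #O + (d + 1) + 1 - 2 = #O + d by omega]
  nlinarith [Nat.mul_le_mul_left #O hW]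

theorem sq_sub_two_mul_add_sum_degree_le {c : ℕ} (hdeg : ∀ v, 0 < G.degree v)
    (hm : #G.edgeFinset = Fintype.card V - 1 + c) (i : V) :
    (G.degree i : ℝ) ^ 2 - 2 * G.degree i + ∑ k ∈ G.neighborFinset i, (G.degree k : ℝ) ≤
      ((Fintype.card V : ℝ) - 2 + 2 * c / ((Fintype.card V : ℝ) - 1)) * G.degree i := by
  have h := G.card_sub_one_mul_sq_add_sum_degree_le hdeg i
  have hV : 2 ≤ Fintype.card V := by
    have := G.card_nonNeighborFinset_add_degree i
    have := hdeg i
    omega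
  obtain ⟨N, hN⟩ := Nat.exists_eq_add_of_le' hV
  rw [hm, hN, show N + 2 - 1 = N + 1 by omega, Nat.add_sub_cancel] at h
  have hN1 : (Fintype.card V : ℝ) - 1 = N + 1 := by rw [hN]; push_cast; ring
  have hN2 : (Fintype.card V : ℝ) - 2 = N := by rw [hN]; push_cast; ring
  rw [hN1, hN2, show ((N : ℝ) + 2 * c / (N + 1)) * G.degree i =
      ((N + 1) * N + 2 * c) * G.degree i / (N + 1) by field_simp, le_div_iff₀ (by positivity)]
  have h' := (Nat.cast_le (α := ℝ)).2 h
  push_cast at h'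
  linarith

end SimpleGraph

theorem ABCMatrix_isSymm {n : ℕ} (G : SimpleGraph (Fin n)) : (ABCMatrix G).IsSymm :=
  IsSymm.ext fun i j => by
    by_cases h : G.Adj i j
    · simp only [ABCMatrix, h, h.symm, if_true, add_comm, mul_comm]
    · simp only [ABCMatrix, h, mt G.adj_symm h, if_false]

theorem ABCMatrix_nonneg {n : ℕ} (G : SimpleGraph (Fin n)) (i j : Fin n) :
    0 ≤ ABCMatrix G i j := by
  unfold ABCMatrix
  split_ifs
  exacts [Real.sqrt_nonneg _, le_rfl]

theorem rhoABC_le_of_mulVec_le {n : ℕ} (G : SimpleGraph (Fin n)) {g : Fin n → ℝ}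
    (hg : ∀ i, 0 < g i) {r : ℝ} (hr : 0 ≤ r) (hMg : ∀ i, (ABCMatrix G *ᵥ g) i ≤ r * g i) :
    rhoABC G ≤ r := by
  refine Real.sSup_le ?_ hr
  rintro _ ⟨x, hx, rfl⟩
  simpa [hx] using
    dotProduct_mulVec_le_of_mulVec_le (ABCMatrix_isSymm G) (ABCMatrix_nonneg G) hg hMg x

theorem ABCMatrix_mulVec_sqrt_degree {n : ℕ} (G : SimpleGraph (Fin n)) (i : Fin n) :
    (ABCMatrix G *ᵥ fun v => √(G.degree v : ℝ)) i =
      (∑ k ∈ G.neighborFinset i, √((G.degree i : ℝ) + G.degree k - 2)) / √(G.degree i : ℝ) := by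
  rw [sum_div, mulVec, dotProduct, G.neighborFinset_eq_filter, sum_filter]
  refine sum_congr rfl fun k _ => ?_
  by_cases hik : G.Adj i k
  · have hk : √(G.degree k : ℝ) ≠ 0 :=
      Real.sqrt_ne_zero'.2 (Nat.cast_pos.2 (G.degree_pos_iff_exists_adj k |>.2 ⟨i, hik.symm⟩))
    rw [ABCMatrix, if_pos hik, if_pos hik, Real.sqrt_div' _ (by positivity),
      Real.sqrt_mul' _ (by positivity)]
    field_simp
  · simp [ABCMatrix, hik]

theorem ABCMatrix_mulVec_sqrt_degree_le {n c : ℕ} (G : SimpleGraph (Fin n))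
    (hdeg : ∀ v, 0 < G.degree v) (hm : #G.edgeFinset = n - 1 + c) (i : Fin n) :
    (ABCMatrix G *ᵥ fun v => √(G.degree v : ℝ)) i ≤
      √((n : ℝ) - 2 + 2 * c / ((n : ℝ) - 1)) * √(G.degree i : ℝ) := by
  have hT := G.sq_sub_two_mul_add_sum_degree_le hdeg (by rwa [Fintype.card_fin]) i
  rw [Fintype.card_fin] at hT
  set T := (n : ℝ) - 2 + 2 * c / ((n : ℝ) - 1)
  set S := ∑ k ∈ G.neighborFinset i, √((G.degree i : ℝ) + G.degree k - 2)
  have hd : (0 : ℝ) < G.degree i := Nat.cast_pos.2 (hdeg i)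
  have hCS : S ^ 2 ≤ G.degree i *
      ((G.degree i : ℝ) ^ 2 - 2 * G.degree i + ∑ k ∈ G.neighborFinset i, (G.degree k : ℝ)) := by
    calc S ^ 2 ≤ #(G.neighborFinset i) *
          ∑ k ∈ G.neighborFinset i, √((G.degree i : ℝ) + G.degree k - 2) ^ 2 :=
          sq_sum_le_card_mul_sum_sq
      _ = G.degree i * ∑ k ∈ G.neighborFinset i, ((G.degree i : ℝ) + G.degree k - 2) := by
          rw [G.card_neighborFinset_eq_degree]
          refine congrArg _ (sum_congr rfl fun k _ => Real.sq_sqrt ?_)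
          have : (1 : ℝ) ≤ G.degree i := Nat.one_le_cast.2 (hdeg i)
          have : (1 : ℝ) ≤ G.degree k := Nat.one_le_cast.2 (hdeg k)
          linarith
      _ = _ := by
          rw [sum_sub_distrib, sum_add_distrib, sum_const, sum_const,
            G.card_neighborFinset_eq_degree, nsmul_eq_mul, nsmul_eq_mul]
          ring
  have hS : S ≤ √T * G.degree i :=
    calc S ≤ √(T * (G.degree i : ℝ) ^ 2) := Real.le_sqrt_of_sq_le <| by
          nlinarith [mul_le_mul_of_nonneg_left hT hd.le]
      _ = √T * G.degree i := by rw [Real.sqrt_mul' _ (sq_nonneg _), Real.sqrt_sq hd.le]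
  rwa [ABCMatrix_mulVec_sqrt_degree, div_le_iff₀ (Real.sqrt_pos.2 hd), mul_assoc,
    Real.mul_self_sqrt hd.le]

theorem stmt5_general {n c : ℕ} (hn : 3 ≤ n) (G : SimpleGraph (Fin n)) (hG : G.Connected)
    (hm : G.edgeFinset.card = n - 1 + c) :
    rhoABC G ≤ Real.sqrt ((n : ℝ) - 2 + 2 * (c : ℝ) / ((n : ℝ) - 1)) := by
  have : Nontrivial (Fin n) := Fin.nontrivial_iff_two_le.2 (by omega)
  have hdeg : ∀ v, 0 < G.degree v := fun v =>
    G.degree_pos_iff_exists_adj v |>.2 (hG.preconnected.exists_adj_of_nontrivial v)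
  exact rhoABC_le_of_mulVec_le G (fun v => Real.sqrt_pos.2 (Nat.cast_pos.2 (hdeg v)))
    (Real.sqrt_nonneg _) (ABCMatrix_mulVec_sqrt_degree_le G hdeg hm)

theorem stmt5 {n c : ℕ} (hn : 3 ≤ n) (G : SimpleGraph (Fin n)) (hG : G.Connected)
    (hm : G.edgeFinset.card = n - 1 + c) (hc : (c : ℝ) ≤ ((n : ℝ) - 1) / 2) :
    rhoABC G ≤ Real.sqrt ((n : ℝ) - 2 + 2 * (c : ℝ) / ((n : ℝ) - 1)) :=
  stmt5_general hn G hG hm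
end

section
/- Let n ≥ 7 and let T be a tree on n vertices with maximum degree n−3 (so T is one of the three trees obtained from the star S_{n−2} by either attaching a path of length 2 to the center, or attaching two pendant edges to one leaf, or attaching one pendant edge to each of two distinct leaves). Then ρ_ABC(T) < √(n − 3.5). -/
/-!
Testing the ABC matrix against the vector `(√dᵢ)` (Schur test) bounds `ρ_ABC(T)` by the largest
row quantity `(1/dᵢ) ∑_{j ∼ i} √(dᵢ + dⱼ - 2)`. If `c` has degree `n - 3`, the handshake lemma for
trees gives `∑_{v ≠ c} (d_v - 1) = 2`. Hence at a vertex `i ≠ c` every neighbour other than `c`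
contributes at most `√2`, while at `c` the excesses `d_j - 1` of the neighbours are natural numbers
summing to at most `2`, so concavity of `√` bounds the row sum by
`(n - 3)√(n - 4) + 2(√(n - 3) - √(n - 4))`. Both estimates fall below `√(n - 3.5)` times the degree.
-/

open scoped Classical
open Finset Matrix

open Real

lemma Real.sqrt_add_one_sub_sqrt_le {a b : ℝ} (ha : 0 ≤ a) (hab : a ≤ b) :
    √(b + 1) - √b ≤ √(a + 1) - √a := by
  have hrecip : ∀ x : ℝ, 0 ≤ x → √(x + 1) - √x = 1 / (√(x + 1) + √x) := fun x hx => by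
    have hpos : 0 < √(x + 1) + √x := by positivity
    rw [eq_div_iff hpos.ne', mul_comm, ← sq_sub_sq, sq_sqrt (by linarith), sq_sqrt hx]
    ring
  rw [hrecip a ha, hrecip b (ha.trans hab)]
  gcongr

lemma Real.sqrt_add_natCast_le {m : ℝ} (hm : 0 ≤ m) (e : ℕ) :
    √(m + e) ≤ √m + e * (√(m + 1) - √m) := by
  induction e with
  | zero => simp
  | succ k ih =>
    have hstep := sqrt_add_one_sub_sqrt_le hm (le_add_of_nonneg_right k.cast_nonneg)
    push_cast
    rw [← add_assoc]
    linarith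

lemma Finset.sum_le_add_card_sub_one_mul {ι : Type*} [DecidableEq ι] (s : Finset ι) (c : ι)
    {f : ι → ℝ} {b B : ℝ} (hbB : b ≤ B) (hc : f c ≤ B) (hf : ∀ j ∈ s, j ≠ c → f j ≤ b) :
    ∑ j ∈ s, f j ≤ B + (#s - 1) * b := by
  calc ∑ j ∈ s, f j ≤ ∑ j ∈ s, (b + if c = j then B - b else 0) := by
        refine sum_le_sum fun j hj => ?_
        split_ifs with hcj
        · subst hcj; linarith
        · linarith [hf j hj (Ne.symm hcj)]
    _ = #s * b + if c ∈ s then B - b else 0 := by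
        rw [sum_add_distrib, sum_const, sum_ite_eq, nsmul_eq_mul]
    _ ≤ B + (#s - 1) * b := by split_ifs <;> linarith

/-- The Schur test; pointwise it is AM-GM with weights `s j / s i` and `s i / s j`. -/
lemma Matrix.dotProduct_mulVec_le_of_mulVec_le_s15 {ι : Type*} [Fintype ι] {A : Matrix ι ι ℝ}
    (hA : A.IsSymm) (hA0 : ∀ i j, 0 ≤ A i j) {s : ι → ℝ} (hs : ∀ i, 0 < s i) {M : ℝ}
    (hM : ∀ i, (A *ᵥ s) i ≤ M * s i) (x : ι → ℝ) :
    x ⬝ᵥ A *ᵥ x ≤ M * ∑ i, x i ^ 2 := by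
  set w : ι → ι → ℝ := fun i j => A i j * s j / s i * x i ^ 2
  have hAji : ∀ i j, A j i = A i j := fun i j => by rw [← hA.apply i j]
  have hpair : ∀ i j, x i * (A i j * x j) ≤ (w i j + w j i) / 2 := by
    intro i j
    have hsi := hs i
    have hsj := hs j
    have hamgm : x i * x j ≤ (s j / s i * x i ^ 2 + s i / s j * x j ^ 2) / 2 := by
      rw [div_mul_eq_mul_div, div_mul_eq_mul_div, div_add_div _ _ hsi.ne' hsj.ne',
        div_div, le_div_iff₀ (by positivity)]
      nlinarith [sq_nonneg (s j * x i - s i * x j)]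
    calc x i * (A i j * x j) = A i j * (x i * x j) := by ring
      _ ≤ A i j * ((s j / s i * x i ^ 2 + s i / s j * x j ^ 2) / 2) := by gcongr; exact hA0 i j
      _ = (w i j + w j i) / 2 := by simp only [w, hAji i j]; ring
  have hrow : ∀ i, ∑ j, w i j = (A *ᵥ s) i / s i * x i ^ 2 := fun i => by
    simp only [w, mulVec, dotProduct, Finset.sum_div, Finset.sum_mul]
  calc x ⬝ᵥ A *ᵥ x = ∑ i, ∑ j, x i * (A i j * x j) := by
        simp only [dotProduct, mulVec, Finset.mul_sum]
    _ ≤ ∑ i, ∑ j, (w i j + w j i) / 2 := by gcongr with i _ j _; exact hpair i j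
    _ = ∑ i, ∑ j, w i j := by
        simp only [add_div, Finset.sum_add_distrib, ← Finset.sum_div]
        rw [Finset.sum_comm (f := fun i j => w j i)]
        ring
    _ ≤ ∑ i, M * x i ^ 2 := by
        gcongr with i
        rw [hrow]
        gcongr ?_ * _
        exact (div_le_iff₀ (hs i)).2 (hM i)
    _ = M * ∑ i, x i ^ 2 := by rw [Finset.mul_sum]

lemma center_row_estimate {N : ℝ} (hN : 7 ≤ N) :
    (N - 3) * √(N - 4) + 2 * (√(N - 3) - √(N - 4)) < (N - 3) * √(N - 3.5) := by
  set p := √(N - 4)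
  set q := √(N - 3)
  set r := √(N - 3.5)
  have hp2 : p ^ 2 = N - 4 := sq_sqrt (by linarith)
  have hq2 : q ^ 2 = N - 3 := sq_sqrt (by linarith)
  have hr2 : r ^ 2 = N - 3.5 := sq_sqrt (by linarith)
  have hr : 0 < r := sqrt_pos.2 (by linarith)
  have hq : 4 * q * r < 4 * r ^ 2 + 1 := by nlinarith [sq_nonneg (q - r), sqrt_nonneg (N - 3)]
  have hp : 4 * p * r ≤ 4 * r ^ 2 - 1 := by nlinarith [sq_nonneg (r - p), sqrt_nonneg (N - 4)]
  have hA : (N - 5) * (4 * p * r) ≤ (N - 5) * (4 * r ^ 2 - 1) := by gcongr; linarith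
  nlinarith

lemma offCenter_row_estimate {N d : ℝ} (hN : 7 ≤ N) (hd : 1 ≤ d) :
    √(d + N - 5) + (d - 1) * √2 < d * √(N - 3.5) := by
  set u := √(d + N - 5)
  set r := √(N - 3.5)
  set s := √2
  have hu2 : u ^ 2 = d + N - 5 := sq_sqrt (by linarith)
  have hr2 : r ^ 2 = N - 3.5 := sq_sqrt (by linarith)
  have hs2 : s ^ 2 = 2 := sq_sqrt (by norm_num)
  have hr : 0 < r := sqrt_pos.2 (by linarith)
  have hs : s < 3 / 2 := by nlinarith [sqrt_nonneg 2]
  have hr' : 9 / 5 < r := by nlinarith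
  have hu : 2 * r * u ≤ r ^ 2 + u ^ 2 := by nlinarith [sq_nonneg (u - r)]
  have hgap : 0 ≤ (d - 1) * (2 * r * (r - s) - 1) :=
    mul_nonneg (by linarith) (by nlinarith)
  refine lt_of_mul_lt_mul_left ?_ (by positivity : 0 ≤ 2 * r)
  nlinarith

namespace SimpleGraph

section Tree

variable {V : Type*} [Fintype V] {G : SimpleGraph V} [DecidableRel G.Adj]

lemma IsTree.sum_degree (hT : G.IsTree) : ∑ v, G.degree v = 2 * (Fintype.card V - 1) := by
  rw [sum_degrees_eq_twice_card_edges, ← hT.card_edgeFinset, Nat.add_sub_cancel]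

variable [DecidableEq V]

lemma IsTree.sum_erase_degree_sub_one (hT : G.IsTree) (hV : 3 ≤ Fintype.card V) {c : V}
    (hc : G.degree c = Fintype.card V - 3) : ∑ v ∈ univ.erase c, (G.degree v - 1) = 2 := by
  have : Nontrivial V := Fintype.one_lt_card_iff_nontrivial.1 (by omega)
  have hd := hT.connected.preconnected.degree_pos_of_nontrivial (G := G)
  have hsum : ∑ v ∈ univ.erase c, (G.degree v - 1) + (Fintype.card V - 1)
      = ∑ v ∈ univ.erase c, G.degree v := by
    rw [← card_univ, ← card_erase_of_mem (mem_univ c), card_eq_sum_ones, ← sum_add_distrib]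
    exact sum_congr rfl fun v _ => Nat.sub_add_cancel (hd v)
  have htot := add_sum_erase univ (fun v => G.degree v) (mem_univ c)
  rw [hT.sum_degree] at htot
  omega

end Tree

section ABC

variable {n : ℕ} (G : SimpleGraph (Fin n))

lemma ABCMatrix_isSymm : (ABCMatrix G).IsSymm := by
  ext i j
  simp only [transpose_apply, ABCMatrix, G.adj_comm j i, add_comm, mul_comm]

lemma ABCMatrix_nonneg (i j : Fin n) : 0 ≤ ABCMatrix G i j := by
  unfold ABCMatrix; split_ifs <;> positivity

lemma ABCMatrix_mulVec_sqrt_degree (hd : ∀ i, 0 < G.degree i) (i : Fin n) :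
    (ABCMatrix G *ᵥ fun j => √(G.degree j)) i
      = (∑ j ∈ G.neighborFinset i, √(G.degree i + G.degree j - 2)) / √(G.degree i) := by
  have hdR : ∀ j, (1 : ℝ) ≤ G.degree j := fun j => by exact_mod_cast hd j
  rw [Finset.sum_div, mulVec, dotProduct, ← Finset.sum_subset (Finset.subset_univ _)]
  · refine Finset.sum_congr rfl fun j hj => ?_
    rw [mem_neighborFinset] at hj
    have hi := hdR i
    have hj' := hdR j
    rw [ABCMatrix, if_pos hj, sqrt_div (by linarith), sqrt_mul (by linarith)]
    field_simp
  · intro j _ hj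
    rw [mem_neighborFinset] at hj
    simp [ABCMatrix, hj]

lemma rhoABC_le (hd : ∀ i, 0 < G.degree i) {M : ℝ} (hM0 : 0 ≤ M)
    (hM : ∀ i, ∑ j ∈ G.neighborFinset i, √(G.degree i + G.degree j - 2) ≤ M * G.degree i) :
    rhoABC G ≤ M := by
  refine Real.sSup_le ?_ hM0
  rintro r ⟨x, hx, rfl⟩
  have hs : ∀ i, 0 < √(G.degree i : ℝ) := fun i => sqrt_pos.2 (by exact_mod_cast hd i)
  have hrow : ∀ i, (ABCMatrix G *ᵥ fun j => √(G.degree j)) i ≤ M * √(G.degree i) := by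
    intro i
    rw [ABCMatrix_mulVec_sqrt_degree G hd, div_le_iff₀ (hs i), mul_assoc,
      mul_self_sqrt (Nat.cast_nonneg _)]
    exact hM i
  simpa [hx] using
    dotProduct_mulVec_le_of_mulVec_le_s15 (ABCMatrix_isSymm G) (ABCMatrix_nonneg G) hs hrow x

lemma rhoABC_lt [NeZero n] (hd : ∀ i, 0 < G.degree i) {M : ℝ}
    (hM : ∀ i, ∑ j ∈ G.neighborFinset i, √(G.degree i + G.degree j - 2) < M * G.degree i) :
    rhoABC G < M := by
  set ratio : Fin n → ℝ := fun i =>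
    (∑ j ∈ G.neighborFinset i, √(G.degree i + G.degree j - 2)) / G.degree i
  have hdR : ∀ i, (0 : ℝ) < G.degree i := fun i => by exact_mod_cast hd i
  refine (G.rhoABC_le hd (M := univ.sup' univ_nonempty ratio) ?_ fun i => ?_).trans_lt ?_
  · exact (div_nonneg (sum_nonneg fun _ _ => sqrt_nonneg _) (hdR 0).le).trans
      (le_sup' ratio (mem_univ 0))
  · exact (div_le_iff₀ (hdR i)).1 (le_sup' ratio (mem_univ i))
  · exact (sup'_lt_iff _).2 fun i _ => (div_lt_iff₀ (hdR i)).2 (hM i)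

end ABC

section RowSums

variable {V : Type*} [Fintype V] [DecidableEq V] {G : SimpleGraph V} [DecidableRel G.Adj]
  {c : V} {N : ℝ}

/-- If the excesses `d_j - 1` could be real, `d_j - 1 = 1/2` would give equality at `N = 7`; the
chord bound for integer excesses is what makes the estimate strict. -/
lemma sum_sqrt_degree_add_lt_of_eq_center (hN : 7 ≤ N) (hd : ∀ v, 0 < G.degree v)
    (hc : (G.degree c : ℝ) = N - 3) (hexc : ∑ v ∈ univ.erase c, (G.degree v - 1) ≤ 2) :
    ∑ j ∈ G.neighborFinset c, √(G.degree c + G.degree j - 2) < √(N - 3.5) * G.degree c := by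
  set δ := √(N - 3) - √(N - 4)
  have hδ : 0 ≤ δ := sub_nonneg.2 (sqrt_le_sqrt (by linarith))
  have hterm : ∀ j, √(G.degree c + G.degree j - 2) ≤ √(N - 4) + (G.degree j - 1 : ℕ) * δ := by
    intro j
    have hchord := sqrt_add_natCast_le (m := N - 4) (by linarith) (G.degree j - 1)
    rwa [show N - 4 + 1 = N - 3 by ring, show N - 4 + ((G.degree j - 1 : ℕ) : ℝ)
      = G.degree c + G.degree j - 2 by rw [Nat.cast_sub (hd j), hc]; push_cast; ring] at hchord
  have hexcN : ∑ j ∈ G.neighborFinset c, ((G.degree j - 1 : ℕ) : ℝ) ≤ 2 := by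
    have hsub : G.neighborFinset c ⊆ univ.erase c := fun j hj =>
      mem_erase.2 ⟨(G.ne_of_adj ((mem_neighborFinset _ _ _).1 hj)).symm, mem_univ j⟩
    exact_mod_cast (sum_le_sum_of_subset hsub).trans hexc
  calc ∑ j ∈ G.neighborFinset c, √(G.degree c + G.degree j - 2)
      ≤ ∑ j ∈ G.neighborFinset c, (√(N - 4) + (G.degree j - 1 : ℕ) * δ) :=
        sum_le_sum fun j _ => hterm j
    _ = (N - 3) * √(N - 4) + (∑ j ∈ G.neighborFinset c, ((G.degree j - 1 : ℕ) : ℝ)) * δ := by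
        rw [sum_add_distrib, sum_const, card_neighborFinset_eq_degree, nsmul_eq_mul, hc, sum_mul]
    _ ≤ (N - 3) * √(N - 4) + 2 * (√(N - 3) - √(N - 4)) := by gcongr
    _ < (N - 3) * √(N - 3.5) := center_row_estimate hN
    _ = √(N - 3.5) * G.degree c := by rw [hc, mul_comm]

lemma sum_sqrt_degree_add_lt_of_ne_center (hN : 7 ≤ N) (hd : ∀ v, 0 < G.degree v)
    (hc : (G.degree c : ℝ) = N - 3) (hexc : ∑ v ∈ univ.erase c, (G.degree v - 1) ≤ 2)
    {i : V} (hi : i ≠ c) :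
    ∑ j ∈ G.neighborFinset i, √(G.degree i + G.degree j - 2) < √(N - 3.5) * G.degree i := by
  have hother : ∀ j ∈ G.neighborFinset i, j ≠ c → √(G.degree i + G.degree j - 2) ≤ √2 := by
    intro j hj hjc
    have hij : i ≠ j := G.ne_of_adj ((mem_neighborFinset _ _ _).1 hj)
    have hpair : (G.degree i - 1) + (G.degree j - 1) ≤ 2 := by
      have hsub : {i, j} ⊆ univ.erase c := by simp [insert_subset_iff, hi, hjc]
      simpa [sum_pair hij] using (sum_le_sum_of_subset hsub).trans hexc
    have h4 : ((G.degree i + G.degree j : ℕ) : ℝ) ≤ 4 := by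
      have := hd i; have := hd j
      exact_mod_cast (by omega : G.degree i + G.degree j ≤ 4)
    push_cast at h4
    exact sqrt_le_sqrt (by linarith)
  have hdi : (1 : ℝ) ≤ G.degree i := by exact_mod_cast hd i
  calc ∑ j ∈ G.neighborFinset i, √(G.degree i + G.degree j - 2)
      ≤ √(G.degree i + N - 5) + (#(G.neighborFinset i) - 1) * √2 :=
        sum_le_add_card_sub_one_mul _ c (sqrt_le_sqrt (by linarith))
          (le_of_eq (by rw [hc]; ring_nf)) hother
    _ < G.degree i * √(N - 3.5) := by
        rw [card_neighborFinset_eq_degree]; exact offCenter_row_estimate hN hdi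
    _ = √(N - 3.5) * G.degree i := mul_comm _ _

end RowSums

end SimpleGraph

theorem stmt15 {n : ℕ} (hn : 7 ≤ n) (T : SimpleGraph (Fin n)) (hT : T.IsTree)
    (hΔ : T.maxDegree = n - 3) :
    rhoABC T < Real.sqrt ((n : ℝ) - 3.5) := by
  have : NeZero n := ⟨by omega⟩
  have : Nontrivial (Fin n) := Fin.nontrivial_iff_two_le.2 (by omega)
  have hd : ∀ v, 0 < T.degree v := fun v =>
    hT.connected.preconnected.degree_pos_of_nontrivial v
  obtain ⟨c, hc⟩ := T.exists_maximal_degree_vertex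
  have hcn : T.degree c = Fintype.card (Fin n) - 3 := by rw [← hc, hΔ, Fintype.card_fin]
  have hexc := (hT.sum_erase_degree_sub_one (by simp; omega) hcn).le
  have hcR : (T.degree c : ℝ) = n - 3 := by
    rw [hcn, Fintype.card_fin, Nat.cast_sub (by omega), Nat.cast_ofNat]
  refine T.rhoABC_lt hd fun i => ?_
  rcases eq_or_ne i c with rfl | hic
  · exact SimpleGraph.sum_sqrt_degree_add_lt_of_eq_center (by exact_mod_cast hn) hd hcR hexc
  · exact SimpleGraph.sum_sqrt_degree_add_lt_of_ne_center (by exact_mod_cast hn) hd hcR hexc hic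
end
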